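/- arXiv:1311.0924 — 2 statements merged into one kernel-verified Lean document; each statement's English description precedes it below -/
import Mathlib

section
/- Suppose the true valuations v_1, …, v_n of all n agents satisfy the gross substitutes (GS) condition. Then for every English Walrasian mechanism with bid space 𝓑 equal to the set of GS valuations, there exists a bid profile b ∈ 𝓑^n that is a pure Nash equilibrium for v, in which every bid b_i is a non-exposure bid, and whose allocation achieves the optimal welfare: ∑_i v_i(X_i(b)) = OPT(v). In particular, the price of stability of the English Walrasian mechanism for GS valuations is 1. -/
open Finset

/-- A valuation on `m` items: normalized at `∅`, monotone, nonnegative. -/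
def IsValuation {m : ℕ} (v : Finset (Fin m) → ℝ) : Prop :=
  v ∅ = 0 ∧ (∀ S T : Finset (Fin m), S ⊆ T → v S ≤ v T) ∧ (∀ S, 0 ≤ v S)

/-- `S` is in the demand set of valuation `v` at prices `p`. -/
def InDemand {m : ℕ} (v : Finset (Fin m) → ℝ) (p : Fin m → ℝ) (S : Finset (Fin m)) : Prop :=
  ∀ T : Finset (Fin m), v T - ∑ j ∈ T, p j ≤ v S - ∑ j ∈ S, p j

/-- Gross substitutes valuations. -/
def IsGS {m : ℕ} (v : Finset (Fin m) → ℝ) : Prop :=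
  IsValuation v ∧
    ∀ p q : Fin m → ℝ, (∀ j, p j ≤ q j) →
      ∀ S : Finset (Fin m), InDemand v p S →
        ∃ T : Finset (Fin m), InDemand v q T ∧ ∀ j ∈ S, p j = q j → j ∈ T

/-- Additive valuations. -/
def IsAdditive {m : ℕ} (v : Finset (Fin m) → ℝ) : Prop :=
  ∃ w : Fin m → ℝ, (∀ j, 0 ≤ w j) ∧ ∀ S : Finset (Fin m), v S = ∑ j ∈ S, w j

/-- XOS valuations: a max over a nonempty finite family of nonnegative additive valuations. -/
def IsXOS {m : ℕ} (v : Finset (Fin m) → ℝ) : Prop :=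
  ∃ (k : ℕ) (w : Fin (k + 1) → Fin m → ℝ),
    (∀ i j, 0 ≤ w i j) ∧
    ∀ S : Finset (Fin m),
      v S = Finset.univ.sup' Finset.univ_nonempty (fun i => ∑ j ∈ S, w i j)

def GSvals (m : ℕ) : Set (Finset (Fin m) → ℝ) := {u | IsGS u}
def XOSvals (m : ℕ) : Set (Finset (Fin m) → ℝ) := {u | IsXOS u}

/-- The welfare `W^b(S)`: the maximum of `∑ i, b i (X i)` over allocations (pairwise disjoint
tuples of subsets) contained in `S`. -/
noncomputable def W {n m : ℕ} (b : Fin n → Finset (Fin m) → ℝ) (S : Finset (Fin m)) : ℝ :=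
  sSup {t : ℝ | ∃ X : Fin n → Finset (Fin m),
    (∀ i j : Fin n, i ≠ j → Disjoint (X i) (X j)) ∧ (∀ i, X i ⊆ S) ∧ t = ∑ i, b i (X i)}

/-- The welfare `W^{b₋ᵢ}(S)` with agent `i` omitted. -/
noncomputable def Wminus {n m : ℕ} (b : Fin n → Finset (Fin m) → ℝ) (i : Fin n)
    (S : Finset (Fin m)) : ℝ :=
  sSup {t : ℝ | ∃ X : Fin n → Finset (Fin m),
    (∀ k l : Fin n, k ≠ l → Disjoint (X k) (X l)) ∧ (∀ k, X k ⊆ S) ∧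
    t = ∑ k ∈ Finset.univ.erase i, b k (X k)}

/-- The welfare `W^b(x)` for a multiplicity vector `x : Fin m → ℕ`: maximum of `∑ i, b i (X i)`
over tuples of sets in which each item `j` is used at most `x j` times. -/
noncomputable def Wmult {n m : ℕ} (b : Fin n → Finset (Fin m) → ℝ) (x : Fin m → ℕ) : ℝ :=
  sSup {t : ℝ | ∃ X : Fin n → Finset (Fin m),
    (∀ j : Fin m, (Finset.univ.filter fun i => j ∈ X i).card ≤ x j) ∧ t = ∑ i, b i (X i)}

/-- The optimal welfare for the true valuations. -/
noncomputable def OPT {n m : ℕ} (v : Fin n → Finset (Fin m) → ℝ) : ℝ := W v Finset.univ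

/-- A mechanism: allocation and payment maps on bid profiles. -/
structure Mechanism (n m : ℕ) where
  alloc : (Fin n → Finset (Fin m) → ℝ) → Fin n → Finset (Fin m)
  pay : (Fin n → Finset (Fin m) → ℝ) → Fin n → ℝ

/-- A bid profile lies in the bid space `B`. -/
def InBidSpace {n m : ℕ} (B : Set (Finset (Fin m) → ℝ))
    (b : Fin n → Finset (Fin m) → ℝ) : Prop :=
  ∀ i, b i ∈ B

/-- On bid profiles from `B`, the allocation is pairwise disjoint. -/
def AllocDisjoint {n m : ℕ} (M : Mechanism n m) (B : Set (Finset (Fin m) → ℝ)) : Prop :=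
  ∀ b, InBidSpace B b → ∀ i j : Fin n, i ≠ j → Disjoint (M.alloc b i) (M.alloc b j)

/-- On bid profiles from `B`, payments are nonnegative. -/
def PayNonneg {n m : ℕ} (M : Mechanism n m) (B : Set (Finset (Fin m) → ℝ)) : Prop :=
  ∀ b, InBidSpace B b → ∀ i, 0 ≤ M.pay b i

/-- The utility of agent `i` with true valuation `v` under bid profile `b`. -/
noncomputable def util {n m : ℕ} (M : Mechanism n m) (v : Finset (Fin m) → ℝ) (i : Fin n)
    (b : Fin n → Finset (Fin m) → ℝ) : ℝ :=
  v (M.alloc b i) - M.pay b i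

/-- Declared welfare maximizer. -/
def IsDWM {n m : ℕ} (M : Mechanism n m) (B : Set (Finset (Fin m) → ℝ)) : Prop :=
  (∀ b, InBidSpace B b → ∑ i, b i (M.alloc b i) = W b Finset.univ) ∧
  (∀ b, InBidSpace B b → ∀ i, M.pay b i ≤ b i (M.alloc b i)) ∧
  (∀ b, InBidSpace B b → ∀ i : Fin n, ∃ b' : Fin n → Finset (Fin m) → ℝ,
    InBidSpace B b' ∧ b' i = b i ∧ M.alloc b' i = M.alloc b i ∧
    M.pay b' i = b i (M.alloc b i))

/-- English Walrasian mechanism: welfare-maximizing allocation w.r.t. the bids, with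
payments given by the minimum Walrasian prices `W^b(𝟙 + e_j) − W^b(𝟙)`. -/
def IsEnglish {n m : ℕ} (M : Mechanism n m) (B : Set (Finset (Fin m) → ℝ)) : Prop :=
  (∀ b, InBidSpace B b → ∑ i, b i (M.alloc b i) = W b Finset.univ) ∧
  (∀ b, InBidSpace B b → ∀ i, M.pay b i =
    ∑ j ∈ M.alloc b i,
      (Wmult b (fun k => if k = j then 2 else 1) - Wmult b (fun _ => 1)))

/-- VCG mechanism: welfare-maximizing allocation w.r.t. the bids, with externality payments. -/
def IsVCG {n m : ℕ} (M : Mechanism n m) (B : Set (Finset (Fin m) → ℝ)) : Prop :=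
  (∀ b, InBidSpace B b → ∑ i, b i (M.alloc b i) = W b Finset.univ) ∧
  (∀ b, InBidSpace B b → ∀ i, M.pay b i =
    Wminus b i Finset.univ - Wminus b i (Finset.univ \ M.alloc b i))

/-- Bid `bi` of agent `i` with true valuation `v` has exposure factor `γ`. -/
def HasExposureFactor {n m : ℕ} (M : Mechanism n m) (B : Set (Finset (Fin m) → ℝ))
    (v : Finset (Fin m) → ℝ) (i : Fin n) (bi : Finset (Fin m) → ℝ) (γ : ℝ) : Prop :=
  ∀ b : Fin n → Finset (Fin m) → ℝ, InBidSpace B b → b i = bi →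
    M.pay b i ≤ (1 + γ) * v (M.alloc b i)

/-- `b` is a pure Nash equilibrium for true valuations `v`. -/
noncomputable def IsNash {n m : ℕ} (M : Mechanism n m) (B : Set (Finset (Fin m) → ℝ))
    (v b : Fin n → Finset (Fin m) → ℝ) : Prop :=
  InBidSpace B b ∧
  ∀ i : Fin n, ∀ bi' ∈ B, util M (v i) i (Function.update b i bi') ≤ util M (v i) i b

/-- A finitely supported probability distribution. -/
structure FinDist (α : Type*) where
  supp : Finset α
  μ : α → ℝ
  nonneg : ∀ a, 0 ≤ μ a
  sum_one : ∑ a ∈ supp, μ a = 1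

/-- Expectation of `f` under a finitely supported distribution. -/
noncomputable def FinDist.exp {α : Type*} (D : FinDist α) (f : α → ℝ) : ℝ :=
  ∑ a ∈ D.supp, D.μ a * f a

/-- Bayes-Nash equilibrium: strategies map types in `V` to bids in `B`, and no unilateral
deviation (depending only on the agent's own type) improves expected utility. -/
noncomputable def IsBNE {n m : ℕ} (M : Mechanism n m) (V B : Set (Finset (Fin m) → ℝ))
    (D : FinDist (Fin n → Finset (Fin m) → ℝ))
    (s : Fin n → (Finset (Fin m) → ℝ) → Finset (Fin m) → ℝ) : Prop :=
  (∀ i : Fin n, ∀ vi ∈ V, s i vi ∈ B) ∧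
  ∀ i : Fin n, ∀ s' : (Finset (Fin m) → ℝ) → Finset (Fin m) → ℝ, (∀ vi ∈ V, s' vi ∈ B) →
    D.exp (fun v => util M (v i) i (Function.update (fun k => s k (v k)) i (s' (v i)))) ≤
    D.exp (fun v => util M (v i) i (fun k => s k (v k)))

/-- Strategy `si` of agent `i` has exposure factor `γ` under distribution `D`. -/
noncomputable def BayesExposure {n m : ℕ} (M : Mechanism n m)
    (V B : Set (Finset (Fin m) → ℝ)) (D : FinDist (Fin n → Finset (Fin m) → ℝ)) (i : Fin n)
    (si : (Finset (Fin m) → ℝ) → Finset (Fin m) → ℝ) (γ : ℝ) : Prop :=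
  ∀ c : (Finset (Fin m) → ℝ) → Fin n → Finset (Fin m) → ℝ,
    (∀ vi ∈ V, InBidSpace B (c vi) ∧ c vi i = si vi) →
    D.exp (fun v => M.pay (c (v i)) i) ≤
      (1 + γ) * D.exp (fun v => (v i) (M.alloc (c (v i)) i))

/-!
Let `X` be a welfare-optimal allocation and let every agent `i` bid `v i (· ∩ X i)`; truncation
preserves gross substitutes, so these are admissible bids. Against them an extra copy of an item
adds no welfare, so all English prices vanish, and each agent receives a bundle worth
`v i (X i)` to it: the outcome is optimal.

No bid is exposed: for GS bids a Walrasian equilibrium exists (a limit of the ascending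
auction), its prices bound the marginal values `W^b(𝟙 + e_j) - W^b(𝟙)`, and by the second welfare
theorem they price each winner's bundle at most at its bid, hence at most at its true value.

No deviation pays: if agent `i` deviates and wins `Y`, each `j ∈ Y` costs at least the others'
loss from giving up `j`. The others' valuations are submodular (a consequence of GS), so these
prices add up to at least their total loss, and optimality of `X` bounds `i`'s utility by
`v i (X i)`.
-/

open Filter Topology

section Welfare

variable {n m : ℕ} (b : Fin n → Finset (Fin m) → ℝ)

lemma finite_of_forall_exists_eq_sum {s : Set ℝ}
    (h : ∀ t ∈ s, ∃ X : Fin n → Finset (Fin m), t = ∑ i, b i (X i)) : s.Finite :=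
  (Set.finite_range fun X => ∑ i, b i (X i)).subset fun t ht =>
    let ⟨X, hX⟩ := h t ht; ⟨X, hX.symm⟩

lemma le_W {S : Finset (Fin m)} {X : Fin n → Finset (Fin m)}
    (hX : ∀ i j : Fin n, i ≠ j → Disjoint (X i) (X j)) (hXS : ∀ i, X i ⊆ S) :
    ∑ i, b i (X i) ≤ W b S := by
  refine le_csSup (Set.Finite.bddAbove ?_) ⟨X, hX, hXS, rfl⟩
  exact finite_of_forall_exists_eq_sum b (by rintro _ ⟨X, -, -, h⟩; exact ⟨X, h⟩)

lemma exists_W_eq (S : Finset (Fin m)) :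
    ∃ X : Fin n → Finset (Fin m), (∀ i j : Fin n, i ≠ j → Disjoint (X i) (X j)) ∧
      (∀ i, X i ⊆ S) ∧ W b S = ∑ i, b i (X i) := by
  have hne : {t | ∃ X : Fin n → Finset (Fin m),
      (∀ i j : Fin n, i ≠ j → Disjoint (X i) (X j)) ∧ (∀ i, X i ⊆ S) ∧
      t = ∑ i, b i (X i)}.Nonempty :=
    ⟨_, fun _ => ∅, fun _ _ _ => disjoint_empty_left _, fun _ => empty_subset _, rfl⟩
  exact hne.csSup_mem
    (finite_of_forall_exists_eq_sum b (by rintro _ ⟨X, -, -, h⟩; exact ⟨X, h⟩))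

lemma le_Wmult {x : Fin m → ℕ} {X : Fin n → Finset (Fin m)}
    (hX : ∀ j, #{i | j ∈ X i} ≤ x j) : ∑ i, b i (X i) ≤ Wmult b x := by
  refine le_csSup (Set.Finite.bddAbove ?_) ⟨X, hX, rfl⟩
  exact finite_of_forall_exists_eq_sum b (by rintro _ ⟨X, -, h⟩; exact ⟨X, h⟩)

lemma exists_Wmult_eq (x : Fin m → ℕ) :
    ∃ X : Fin n → Finset (Fin m), (∀ j, #{i | j ∈ X i} ≤ x j) ∧
      Wmult b x = ∑ i, b i (X i) := by
  have hne : {t | ∃ X : Fin n → Finset (Fin m), (∀ j, #{i | j ∈ X i} ≤ x j) ∧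
      t = ∑ i, b i (X i)}.Nonempty := ⟨_, fun _ => ∅, fun _ => by simp, rfl⟩
  exact hne.csSup_mem
    (finite_of_forall_exists_eq_sum b (by rintro _ ⟨X, -, h⟩; exact ⟨X, h⟩))

lemma card_filter_mem_le_one {X : Fin n → Finset (Fin m)}
    (hX : ∀ i j : Fin n, i ≠ j → Disjoint (X i) (X j)) (j : Fin m) :
    #{i | j ∈ X i} ≤ 1 :=
  card_le_one.2 fun i hi k hk => by
    by_contra hik
    exact disjoint_left.1 (hX i k hik) (mem_filter.1 hi).2 (mem_filter.1 hk).2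

lemma Wmult_one : Wmult b (fun _ => 1) = W b univ := by
  refine congrArg sSup (Set.ext fun t => ⟨?_, ?_⟩)
  · rintro ⟨X, hX, rfl⟩
    refine ⟨X, fun i k hik => disjoint_left.2 fun j hi hk => hik ?_, fun _ => subset_univ _,
      rfl⟩
    exact card_le_one.1 (hX j) i (by simpa using hi) k (by simpa using hk)
  · rintro ⟨X, hX, -, rfl⟩
    exact ⟨X, card_filter_mem_le_one hX, rfl⟩

end Welfare

section Demand

variable {m : ℕ} {v : Finset (Fin m) → ℝ} {p : Fin m → ℝ} {S : Finset (Fin m)} {j : Fin m}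

lemma exists_inDemand (v : Finset (Fin m) → ℝ) (p : Fin m → ℝ) : ∃ S, InDemand v p S := by
  obtain ⟨S, -, hS⟩ := exists_max_image univ (fun S => v S - ∑ j ∈ S, p j) univ_nonempty
  exact ⟨S, fun T => hS T (mem_univ T)⟩

lemma InDemand.price_le_marginal (hS : InDemand v p S) (hj : j ∈ S) :
    p j ≤ v S - v (S.erase j) := by
  have := hS (S.erase j)
  rw [sum_erase_eq_sub hj] at this
  linarith

lemma InDemand.price_le (hv : IsValuation v) (hS : InDemand v p S) (hj : j ∈ S) :
    p j ≤ v univ := by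
  have := hS.price_le_marginal hj
  linarith [hv.2.1 S univ (subset_univ S), hv.2.2 (S.erase j)]

lemma InDemand.subset_of_price_gt {U : Finset (Fin m)} (hv : IsValuation v)
    (hU : ∀ j ∉ U, v univ < p j) (hS : InDemand v p S) : S ⊆ U := fun j hj => by
  by_contra hjU
  exact (hU j hjU).not_ge (hS.price_le hv hj)

end Demand

section Submodular

variable {m : ℕ} {v : Finset (Fin m) → ℝ}

lemma IsValuation.sub_sum_le_of_mem (hv : IsValuation v) {p : Fin m → ℝ} (hp : ∀ j, 0 ≤ p j)
    {S T : Finset (Fin m)} {y : Fin m} (hyT : y ∈ T) (hT : T ⊆ insert y S) :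
    v T - ∑ j ∈ T, p j ≤ v (insert y S) - p y := by
  linarith [hv.2.1 _ _ hT, single_le_sum (fun j _ => hp j) hyT]

lemma IsValuation.sub_sum_le_max (hv : IsValuation v) {p : Fin m → ℝ} (hp : ∀ j, 0 ≤ p j)
    {S T : Finset (Fin m)} {y : Fin m} (hT : T ⊆ insert y S) :
    v T - ∑ j ∈ T, p j ≤ max (v S) (v (insert y S) - p y) := by
  by_cases hyT : y ∈ T
  · exact le_max_of_le_right (hv.sub_sum_le_of_mem hp hyT hT)
  · refine le_max_of_le_left ?_
    linarith [hv.2.1 _ _ ((subset_insert_iff_of_notMem hyT).1 hT),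
      sum_nonneg fun j (_ : j ∈ T) => hp j]

lemma IsGS.exists_inDemand_update (hv : IsGS v) {p : Fin m → ℝ} {D : Finset (Fin m)}
    {x y : Fin m} {r : ℝ} (hD : InDemand v p D) (hxD : x ∈ D) (hxy : x ≠ y) (hr : p y ≤ r) :
    ∃ T, InDemand v (Function.update p y r) T ∧ x ∈ T := by
  obtain ⟨T, hT, hkeep⟩ := hv.2 p (Function.update p y r) (fun j => by
    rw [Function.update_apply]; split_ifs with h
    · exact h ▸ hr
    · exact le_rfl) D hD
  exact ⟨T, hT, hkeep x hxD (Function.update_of_ne hxy _ _).symm⟩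

/-- At the prices `p` below every demanded set contains `x`; by GS, raising the price of `y` to a
prohibitive level keeps `x` demanded, which is impossible when `x` and `y` are complements. -/
lemma IsGS.insert_insert_add_le {S : Finset (Fin m)} {x y : Fin m} (hv : IsGS v)
    (hx : x ∉ S) (hy : y ∉ S) (hxy : x ≠ y) :
    v (insert x (insert y S)) + v S ≤ v (insert x S) + v (insert y S) := by
  have hval := hv.1
  by_contra! hlt
  set ε := (v (insert x (insert y S)) + v S - v (insert x S) - v (insert y S)) / 2 with hε_def
  have hε : 0 < ε := by linarith
  set C := v univ + 1
  let p : Fin m → ℝ := fun j =>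
    if j = x then v (insert x S) - v S + ε else if j = y then v (insert y S) - v S
    else if j ∈ S then 0 else C
  have hC : v univ < C := lt_add_one _
  have hU : 0 ≤ v univ := hval.2.2 univ
  have hyS : v S ≤ v (insert y S) := hval.2.1 _ _ (subset_insert _ _)
  have hpx : p x = v (insert x S) - v S + ε := if_pos rfl
  have hpy : p y = v (insert y S) - v S := by simp [p, hxy.symm]
  have hpS : ∀ j ∈ S, p j = 0 := fun j hj => by
    simp [p, hj, show j ≠ x by rintro rfl; exact hx hj, show j ≠ y by rintro rfl; exact hy hj]
  have hp_out : ∀ j ∉ insert x (insert y S), v univ < p j := fun j hj => by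
    simp only [mem_insert, not_or] at hj
    simpa [p, hj.1, hj.2.1, hj.2.2] using hC
  have hp0 : ∀ j, 0 ≤ p j := fun j => by
    have := hval.2.1 _ _ (subset_insert x S)
    simp only [p]; split_ifs <;> linarith
  obtain ⟨D, hD⟩ := exists_inDemand v p
  have hxD : x ∈ D := by
    by_contra hxD
    have hDy := (subset_insert_iff_of_notMem hxD).1 (hD.subset_of_price_gt hval hp_out)
    have hD_le := hval.sub_sum_le_max hp0 hDy
    have hxyS : x ∉ insert y S := by simp [hx, hxy]
    have := hD (insert x (insert y S))
    rw [sum_insert hxyS, sum_insert hy, sum_eq_zero hpS, hpx, hpy] at this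
    rw [hpy, sub_sub_cancel, max_self] at hD_le
    linarith
  obtain ⟨T, hT, hxT⟩ := hv.exists_inDemand_update hD hxD hxy (r := C)
    (by rw [hpy]; linarith [hval.2.1 _ _ (subset_univ (insert y S)), hval.2.2 S])
  have hq0 : ∀ j, 0 ≤ Function.update p y C j := fun j => by
    rw [Function.update_apply]; split_ifs
    · linarith
    · exact hp0 j
  have hTx : T ⊆ insert x S := hT.subset_of_price_gt hval fun j hj => by
    rw [Function.update_apply]; split_ifs with h
    · exact hC
    · exact hp_out j (by simp_all)
  have hqS : ∑ j ∈ S, Function.update p y C j = 0 := sum_eq_zero fun j hj => by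
    rw [Function.update_of_ne (by rintro rfl; exact hy hj)]; exact hpS j hj
  have := hT S
  rw [hqS] at this
  linarith [hval.sub_sum_le_of_mem hq0 hxT hTx, (Function.update_of_ne hxy C p).trans hpx]

lemma IsGS.marginal_antitone (hv : IsGS v) {A B : Finset (Fin m)} {j : Fin m} (hAB : A ⊆ B)
    (hjB : j ∉ B) : v (insert j B) - v B ≤ v (insert j A) - v A := by
  induction B using Finset.strongInduction generalizing A with
  | H B ih =>
    obtain rfl | hAB' := eq_or_ssubset_of_subset hAB
    · exact le_rfl
    obtain ⟨x, hxB, hxA⟩ := exists_of_ssubset hAB'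
    have hjx : j ≠ x := by rintro rfl; exact hjB hxB
    have hjB' : j ∉ B.erase x := fun h => hjB (mem_of_mem_erase h)
    have hstep := hv.insert_insert_add_le hjB' (notMem_erase x B) hjx
    rw [insert_erase hxB] at hstep
    have := ih (B.erase x) (erase_ssubset hxB) (subset_erase.2 ⟨hAB, hxA⟩) hjB'
    linarith

lemma IsGS.sub_le_sum_marginal (hv : IsGS v) {C D : Finset (Fin m)} (hCD : Disjoint C D) :
    v (C ∪ D) - v C ≤ ∑ j ∈ D, (v (insert j C) - v C) := by
  induction D using Finset.induction with
  | empty => simp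
  | insert j D hjD ih =>
    rw [disjoint_insert_right] at hCD
    have := hv.marginal_antitone (j := j) (subset_union_left (s₁ := C) (s₂ := D))
      (by simp [hCD.1, hjD])
    rw [union_insert, sum_insert hjD]
    linarith [ih hCD.2]

lemma IsGS.sub_sdiff_le_sum (hv : IsGS v) (X A : Finset (Fin m)) :
    v X - v (X \ A) ≤ ∑ j ∈ A, (v (X \ A.erase j) - v (X \ A)) := by
  have hsum : ∑ j ∈ A, (v (X \ A.erase j) - v (X \ A)) =
      ∑ j ∈ X ∩ A, (v (insert j (X \ A)) - v (X \ A)) := by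
    rw [← sum_subset (inter_subset_right (s₁ := X)) fun j _ hj => ?_]
    · exact sum_congr rfl fun j hj => by rw [sdiff_erase (mem_inter.1 hj).1]
    · have hjX : j ∉ X := fun h => hj (mem_inter.2 ⟨h, by assumption⟩)
      rw [show X \ A.erase j = X \ A by grind, sub_self]
  have := hv.sub_le_sum_marginal (disjoint_sdiff_inter X A)
  rwa [sdiff_union_inter, ← hsum] at this

end Submodular

section Truncation

variable {m : ℕ} {v : Finset (Fin m) → ℝ}

lemma sum_filter_nonpos_le {ι : Type*} {f : ι → ℝ} {R U : Finset ι} (hRU : R ⊆ U) :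
    ∑ j ∈ U with f j ≤ 0, f j ≤ ∑ j ∈ R, f j := by
  rw [sum_filter]
  calc ∑ j ∈ U, (if f j ≤ 0 then f j else 0)
      ≤ ∑ j ∈ R, (if f j ≤ 0 then f j else 0) :=
        sum_le_sum_of_subset_of_nonpos' hRU fun j _ _ => by split_ifs <;> linarith
    _ ≤ ∑ j ∈ R, f j := sum_le_sum fun j _ => by split_ifs <;> linarith

lemma IsValuation.sub_sum_le_inter (hv : IsValuation v) {p : Fin m → ℝ} {X : Finset (Fin m)}
    (hp : ∀ j ∉ X, v univ ≤ p j) (T : Finset (Fin m)) :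
    v T - ∑ j ∈ T, p j ≤ v (T ∩ X) - ∑ j ∈ T ∩ X, p j := by
  rw [← sum_inter_add_sum_sdiff T X p]
  rcases (T \ X).eq_empty_or_nonempty with h | ⟨j, hj⟩
  · rw [h, inter_eq_left.2 (sdiff_eq_empty_iff_subset.1 h), sum_empty, add_zero]
  · have hpos : ∀ k ∈ T \ X, 0 ≤ p k := fun k hk =>
      (hv.2.2 univ).trans (hp k (mem_sdiff.1 hk).2)
    linarith [single_le_sum hpos hj, hp j (mem_sdiff.1 hj).2, hv.2.1 T univ (subset_univ T),
      hv.2.2 (T ∩ X)]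

lemma sub_sum_inter_eq (v : Finset (Fin m) → ℝ) (p : Fin m → ℝ) (X T : Finset (Fin m)) :
    v (T ∩ X) - ∑ j ∈ T, p j =
      v (T ∩ X) - ∑ j ∈ T ∩ X, p j - ∑ j ∈ T \ X, p j := by
  rw [← sum_inter_add_sum_sdiff T X p]; ring

lemma InDemand.inter_of_truncate {p pt : Fin m → ℝ} {X S : Finset (Fin m)} (hv : IsValuation v)
    (hS : InDemand (fun S => v (S ∩ X)) p S) (hpt : ∀ j ∈ X, pt j = p j)
    (hpt_out : ∀ j ∉ X, v univ ≤ pt j) : InDemand v pt (S ∩ X) := fun T => by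
  have hsum : ∀ T ⊆ X, ∑ j ∈ T, pt j = ∑ j ∈ T, p j :=
    fun T hT => sum_congr rfl fun j hj => hpt j (hT hj)
  have hT := hS (T ∩ X ∪ S \ X)
  simp only at hT
  rw [sub_sum_inter_eq, sub_sum_inter_eq v p X S, show (T ∩ X ∪ S \ X) ∩ X = T ∩ X by grind,
    show (T ∩ X ∪ S \ X) \ X = S \ X by grind] at hT
  rw [hsum _ inter_subset_right]
  linarith [hv.sub_sum_le_inter hpt_out T, hsum _ (inter_subset_right (s₁ := T))]

lemma InDemand.truncate_union {q qt : Fin m → ℝ} {X B : Finset (Fin m)} (hB : InDemand v qt B)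
    (hBX : B ⊆ X) (hqt : ∀ j ∈ X, qt j = q j) :
    InDemand (fun S => v (S ∩ X)) q (B ∪ Xᶜ.filter (q · ≤ 0)) := fun T => by
  set N := Xᶜ.filter (q · ≤ 0)
  have hN : ∀ j, j ∈ N ↔ j ∉ X ∧ q j ≤ 0 := by simp [N]
  have hsum : ∀ T ⊆ X, ∑ j ∈ T, qt j = ∑ j ∈ T, q j :=
    fun T hT => sum_congr rfl fun j hj => hqt j (hT hj)
  have hBNX : (B ∪ N) ∩ X = B := by
    ext j; have := @hBX j; simp only [Finset.mem_inter, Finset.mem_union, hN]; tauto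
  have hBN_X : (B ∪ N) \ X = N := by
    ext j; have := @hBX j; simp only [Finset.mem_sdiff, Finset.mem_union, hN]; tauto
  simp only
  rw [sub_sum_inter_eq, sub_sum_inter_eq v q X (B ∪ N), hBNX, hBN_X]
  have hTB := hB (T ∩ X)
  rw [hsum _ inter_subset_right, hsum _ hBX] at hTB
  linarith [sum_filter_nonpos_le (f := q) (R := T \ X) (U := Xᶜ)
    fun j hj => mem_compl.2 (mem_sdiff.1 hj).2]

/-- Off `X` the truncated valuation is additive with zero values, so its demand splits into a
demand of `v` at prices made prohibitive off `X`, plus all items off `X` of nonpositive price. -/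
lemma IsGS.truncate (hv : IsGS v) (X : Finset (Fin m)) : IsGS fun S => v (S ∩ X) := by
  obtain ⟨hval, hgs⟩ := hv
  refine ⟨⟨by simp [hval.1], fun S T hST => hval.2.1 _ _ (inter_subset_inter_right hST),
    fun S => hval.2.2 _⟩, fun p q hpq S hS => ?_⟩
  let pt : Fin m → ℝ := fun j => if j ∈ X then p j else v univ
  let qt : Fin m → ℝ := fun j => if j ∈ X then q j else v univ + 1
  have hptq : ∀ j, pt j ≤ qt j := fun j => by
    simp only [pt, qt]; split_ifs <;> linarith [hpq j]
  obtain ⟨B, hB, hkeep⟩ := hgs pt qt hptq _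
    (hS.inter_of_truncate hval (fun j hj => if_pos hj) fun j hj => by simp [pt, hj])
  have hBX : B ⊆ X := hB.subset_of_price_gt hval fun j hj => by simp [qt, hj]
  refine ⟨_, hB.truncate_union hBX fun j hj => if_pos hj, fun j hjS hpqj => ?_⟩
  by_cases hjX : j ∈ X
  · exact mem_union_left _ (hkeep j (mem_inter.2 ⟨hjS, hjX⟩) (by simp [pt, qt, hjX, hpqj]))
  · have hpj := hS.price_le_marginal hjS
    rw [show S.erase j ∩ X = S ∩ X by grind, sub_self] at hpj
    exact mem_union_right _ (mem_filter.2 ⟨mem_compl.2 hjX, hpqj ▸ hpj⟩)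

end Truncation

section Walrasian

variable {n m : ℕ} {c : Fin n → Finset (Fin m) → ℝ}

/-- Walrasian equilibrium up to `ε`; the exact notion is the case `ε = 0`. -/
structure IsApproxWalrasian (c : Fin n → Finset (Fin m) → ℝ) (ε : ℝ) (p : Fin m → ℝ)
    (B : Fin n → Finset (Fin m)) : Prop where
  price_nonneg : ∀ j, 0 ≤ p j
  disjoint : ∀ a b, a ≠ b → Disjoint (B a) (B b)
  exists_mem_of_price_pos : ∀ j, 0 < p j → ∃ a, j ∈ B a
  demand : ∀ a T, c a T - ∑ j ∈ T, p j ≤ c a (B a) - ∑ j ∈ B a, p j + ε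

namespace IsApproxWalrasian

variable {ε ε' : ℝ} {p : Fin m → ℝ} {B : Fin n → Finset (Fin m)}

lemma mono (h : IsApproxWalrasian c ε p B) (hεε' : ε ≤ ε') : IsApproxWalrasian c ε' p B :=
  ⟨h.price_nonneg, h.disjoint, h.exists_mem_of_price_pos, fun a T => by
    linarith [h.demand a T]⟩

lemma inDemand (h : IsApproxWalrasian c 0 p B) (a : Fin n) : InDemand (c a) p (B a) :=
  fun T => by simpa using h.demand a T

lemma of_tendsto {ε : ℕ → ℝ} {p : ℕ → Fin m → ℝ} {p₀ : Fin m → ℝ}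
    (h : ∀ k, IsApproxWalrasian c (ε k) (p k) B) (hε : Tendsto ε atTop (𝓝 0))
    (hp : Tendsto p atTop (𝓝 p₀)) : IsApproxWalrasian c 0 p₀ B := by
  have hpj : ∀ j, Tendsto (fun k => p k j) atTop (𝓝 (p₀ j)) := tendsto_pi_nhds.1 hp
  have hsum : ∀ T : Finset (Fin m),
      Tendsto (fun k => ∑ j ∈ T, p k j) atTop (𝓝 (∑ j ∈ T, p₀ j)) :=
    fun T => tendsto_finsetSum T fun j _ => hpj j
  refine ⟨fun j => ge_of_tendsto' (hpj j) fun k => (h k).price_nonneg j, (h 0).disjoint,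
    fun j hj => ?_, fun a T => ?_⟩
  · obtain ⟨k, hk⟩ := ((hpj j).eventually (eventually_gt_nhds hj)).exists
    exact (h k).exists_mem_of_price_pos j hk
  · refine le_of_tendsto_of_tendsto' (tendsto_const_nhds.sub (hsum T)) ?_ fun k => (h k).demand a T
    simpa using (tendsto_const_nhds.sub (hsum (B a))).add hε

end IsApproxWalrasian

end Walrasian

/-- A state of the ascending auction of Kelso and Crawford. -/
structure AuctionState (n m : ℕ) where
  price : Fin m → ℝ
  owner : Fin m → Option (Fin n)

namespace AuctionState

variable {n m : ℕ} (σ : AuctionState n m) (δ : ℝ) {c : Fin n → Finset (Fin m) → ℝ}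

def bundle (a : Fin n) : Finset (Fin m) := {j | σ.owner j = some a}

def persPrice (a : Fin n) (j : Fin m) : ℝ := σ.price j + if σ.owner j = some a then 0 else δ

def bid (a : Fin n) (S : Finset (Fin m)) : AuctionState n m where
  price j := if j ∈ S ∧ σ.owner j ≠ some a then σ.price j + δ else σ.price j
  owner j := if j ∈ S then some a else σ.owner j

variable {σ δ} {a b : Fin n} {S : Finset (Fin m)}

lemma mem_bundle {j : Fin m} : j ∈ σ.bundle a ↔ σ.owner j = some a := by simp [bundle]

lemma bundle_bid_self (hS : σ.bundle a ⊆ S) : (σ.bid δ a S).bundle a = S := by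
  ext j
  simp only [mem_bundle, bid]
  split_ifs with hj
  · simpa using hj
  · exact ⟨fun h => hS (mem_bundle.2 h), fun h => absurd h hj⟩

lemma bundle_bid_of_ne (hba : b ≠ a) : (σ.bid δ a S).bundle b = σ.bundle b \ S := by
  ext j
  simp only [mem_bundle, bid, Finset.mem_sdiff]
  split_ifs with hj <;> simp [hj, Ne.symm hba]

lemma persPrice_bid_self : (σ.bid δ a S).persPrice δ a = σ.persPrice δ a := by
  ext j
  simp only [persPrice, bid]
  split_ifs <;> simp_all

lemma persPrice_le_bid (hδ : 0 ≤ δ) (hba : b ≠ a) (j : Fin m) :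
    σ.persPrice δ b j ≤ (σ.bid δ a S).persPrice δ b j := by
  simp only [persPrice, bid]
  split_ifs <;> simp_all
  linarith

lemma persPrice_bid_of_notMem {j : Fin m} (hj : j ∉ S) :
    (σ.bid δ a S).persPrice δ b j = σ.persPrice δ b j := by
  simp [persPrice, bid, hj]

lemma sum_price_bid :
    ∑ j, (σ.bid δ a S).price j =
      ∑ j, σ.price j + #{j | j ∈ S ∧ σ.owner j ≠ some a} * δ := by
  have h : ∀ j, (σ.bid δ a S).price j =
      σ.price j + if j ∈ S ∧ σ.owner j ≠ some a then δ else 0 := fun j => by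
    simp only [bid]; split_ifs <;> ring
  simp only [h, sum_add_distrib, sum_ite, sum_const_zero, sum_const, nsmul_eq_mul, add_zero]

structure Invariant (c : Fin n → Finset (Fin m) → ℝ) (δ : ℝ) (σ : AuctionState n m) :
    Prop where
  price_nonneg : ∀ j, 0 ≤ σ.price j
  price_eq_zero : ∀ j, σ.owner j = none → σ.price j = 0
  price_le : ∀ j, σ.price j ≤ ∑ a, c a univ
  exists_inDemand : ∀ a, ∃ S, InDemand (c a) (σ.persPrice δ a) S ∧ σ.bundle a ⊆ S

def Settled (c : Fin n → Finset (Fin m) → ℝ) (δ : ℝ) (σ : AuctionState n m) : Prop :=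
  ∀ a, InDemand (c a) (σ.persPrice δ a) (σ.bundle a)

lemma invariant_init (hc : ∀ a, IsGS (c a)) : Invariant c δ ⟨fun _ => 0, fun _ => none⟩ :=
  ⟨fun _ => le_rfl, fun _ _ => rfl, fun _ => sum_nonneg fun a _ => (hc a).1.2.2 univ,
    fun a => (exists_inDemand _ _).imp fun S hS => ⟨hS, by simp [bundle]⟩⟩

/-- Gross substitutes is what keeps the invariant: the other agents only see price increases,
on items outside `S` their prices are unchanged, so they still demand what they keep. -/
lemma Invariant.bid (hc : ∀ a, IsGS (c a)) (hδ : 0 ≤ δ) (hσ : σ.Invariant c δ)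
    (hS : InDemand (c a) (σ.persPrice δ a) S) (hsub : σ.bundle a ⊆ S) :
    (σ.bid δ a S).Invariant c δ := by
  refine ⟨fun j => ?_, fun j hj => ?_, fun j => ?_, fun b => ?_⟩
  · simp only [AuctionState.bid]; split_ifs <;> linarith [hσ.price_nonneg j]
  · simp only [AuctionState.bid] at hj ⊢
    split_ifs at hj ⊢ with h <;> simp_all [hσ.price_eq_zero j]
  · simp only [AuctionState.bid]
    split_ifs with h
    · have := hS.price_le (hc a).1 h.1
      simp only [persPrice, if_neg h.2] at this
      linarith [single_le_sum (fun b _ => (hc b).1.2.2 univ) (mem_univ a)]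
    · exact hσ.price_le j
  · rcases eq_or_ne b a with rfl | hba
    · exact ⟨S, by rwa [persPrice_bid_self], (bundle_bid_self hsub).subset⟩
    obtain ⟨T, hT, hbT⟩ := hσ.exists_inDemand b
    obtain ⟨T', hT', hkeep⟩ := (hc b).2 _ _ (persPrice_le_bid hδ hba) T hT
    refine ⟨T', hT', fun j hj => ?_⟩
    rw [bundle_bid_of_ne hba, Finset.mem_sdiff] at hj
    exact hkeep j (hbT hj.1) (persPrice_bid_of_notMem hj.2).symm

lemma Invariant.exists_sum_price_ge (hc : ∀ a, IsGS (c a)) (hδ : 0 ≤ δ)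
    (hσ : σ.Invariant c δ) (hns : ¬ σ.Settled c δ) :
    ∃ σ' : AuctionState n m, σ'.Invariant c δ ∧
      ∑ j, σ.price j + δ ≤ ∑ j, σ'.price j := by
  obtain ⟨a, ha⟩ := not_forall.1 hns
  obtain ⟨S, hS, hsub⟩ := hσ.exists_inDemand a
  obtain ⟨j, hjS, hj⟩ := exists_of_ssubset (hsub.ssubset_of_ne fun h => ha (h ▸ hS))
  refine ⟨σ.bid δ a S, hσ.bid hc hδ hS hsub, ?_⟩
  have hcard : (1 : ℝ) ≤ #{j | j ∈ S ∧ σ.owner j ≠ some a} := by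
    exact_mod_cast card_pos.2 ⟨j, by simpa [mem_bundle] using And.intro hjS hj⟩
  rw [sum_price_bid]
  nlinarith

lemma exists_invariant_settled (hc : ∀ a, IsGS (c a)) (hδ : 0 < δ) :
    ∃ σ : AuctionState n m, σ.Invariant c δ ∧ σ.Settled c δ := by
  have key : ∀ k : ℕ, ∃ σ : AuctionState n m, σ.Invariant c δ ∧
      (σ.Settled c δ ∨ k * δ ≤ ∑ j, σ.price j) := by
    intro k
    induction k with
    | zero => exact ⟨_, invariant_init hc, Or.inr (by simp)⟩
    | succ k ih =>
      obtain ⟨σ, hσ, hk⟩ := ih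
      by_cases hs : σ.Settled c δ
      · exact ⟨σ, hσ, Or.inl hs⟩
      obtain ⟨σ', hσ', hsum⟩ := hσ.exists_sum_price_ge hc hδ.le hs
      exact ⟨σ', hσ', Or.inr (by push_cast; linarith [hk.resolve_left hs])⟩
  -- prices are bounded, so the auction cannot run forever
  obtain ⟨k, hk⟩ := exists_nat_gt ((m * ∑ a, c a univ) / δ)
  obtain ⟨σ, hσ, hs | hsum⟩ := key k
  · exact ⟨σ, hσ, hs⟩
  have : ∑ j, σ.price j ≤ m * ∑ a, c a univ := by
    simpa using sum_le_sum fun j (_ : j ∈ univ) => hσ.price_le j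
  rw [div_lt_iff₀ hδ] at hk
  exact absurd hsum (by linarith)

lemma Invariant.isApproxWalrasian (hσ : σ.Invariant c δ) (hs : σ.Settled c δ)
    (hδ : 0 ≤ δ) :
    IsApproxWalrasian c (m * δ) σ.price σ.bundle := by
  refine ⟨hσ.price_nonneg, fun a b hab => disjoint_left.2 fun j ha hb => ?_, fun j hj => ?_,
    fun a T => ?_⟩
  · rw [mem_bundle] at ha hb
    exact hab (Option.some_injective _ (ha.symm.trans hb))
  · obtain ⟨a, ha⟩ := Option.ne_none_iff_exists'.1 fun h => hj.ne' (hσ.price_eq_zero j h)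
    exact ⟨a, mem_bundle.2 ha⟩
  · have hT : ∑ j ∈ T, σ.persPrice δ a j ≤ ∑ j ∈ T, σ.price j + m * δ := by
      calc ∑ j ∈ T, σ.persPrice δ a j ≤ ∑ j ∈ T, (σ.price j + δ) :=
            sum_le_sum fun j _ => by simp only [persPrice]; split_ifs <;> linarith
        _ ≤ ∑ j ∈ T, σ.price j + m * δ := by
            rw [sum_add_distrib, sum_const, nsmul_eq_mul]
            have : (#T : ℝ) ≤ m := by
              exact_mod_cast (card_le_univ T).trans_eq (Fintype.card_fin m)
            nlinarith
    have hB : ∑ j ∈ σ.bundle a, σ.persPrice δ a j = ∑ j ∈ σ.bundle a, σ.price j :=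
      sum_congr rfl fun j hj => by simp [persPrice, mem_bundle.1 hj]
    linarith [hs a T]

end AuctionState

section Existence

variable {n m : ℕ} {c : Fin n → Finset (Fin m) → ℝ}

lemma exists_isApproxWalrasian (hc : ∀ a, IsGS (c a)) {ε : ℝ} (hε : 0 < ε) :
    ∃ p B, IsApproxWalrasian c ε p B ∧ ∀ j, p j ≤ ∑ a, c a univ := by
  obtain ⟨σ, hσ, hs⟩ :=
    AuctionState.exists_invariant_settled hc (δ := ε / (m + 1)) (by positivity)
  refine ⟨σ.price, σ.bundle, (hσ.isApproxWalrasian hs (by positivity)).mono ?_, hσ.price_le⟩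
  rw [mul_div_assoc', div_le_iff₀ (by positivity)]
  nlinarith

/-- Kelso–Crawford. As there are finitely many allocations, one of them is approximately
supported for every `ε`; its supporting prices have a convergent subsequence. -/
theorem exists_isWalrasian (hc : ∀ a, IsGS (c a)) : ∃ p B, IsApproxWalrasian c 0 p B := by
  obtain ⟨B, hB⟩ : ∃ B, ∀ ε > 0, ∃ p, IsApproxWalrasian c ε p B ∧
      ∀ j, p j ∈ Set.Icc 0 (∑ a, c a univ) := by
    by_contra! h
    choose ε hε hB using h
    obtain ⟨p, B, hpB, hp⟩ :=
      exists_isApproxWalrasian hc ((lt_inf'_iff univ_nonempty).2 fun B _ => hε B)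
    obtain ⟨j, hj⟩ := hB B p (hpB.mono (inf'_le _ (mem_univ B)))
    exact hj ⟨hpB.price_nonneg j, hp j⟩
  choose p hp hbound using fun k : ℕ => hB (1 / (k + 1)) Nat.one_div_pos_of_nat
  obtain ⟨p₀, -, φ, hφ, hlim⟩ := (isCompact_univ_pi fun _ => isCompact_Icc).tendsto_subseq
    fun k => Set.mem_univ_pi.2 (hbound k)
  exact ⟨p₀, B, .of_tendsto (fun k => hp (φ k))
    (tendsto_one_div_add_atTop_nhds_zero_nat.comp hφ.tendsto_atTop) hlim⟩

end Existence

section EnglishPrices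

variable {n m : ℕ} {c : Fin n → Finset (Fin m) → ℝ} {p : Fin m → ℝ}
  {B : Fin n → Finset (Fin m)}

lemma sum_sum_price_eq (Z : Fin n → Finset (Fin m)) (p : Fin m → ℝ) :
    ∑ a, ∑ j ∈ Z a, p j = ∑ j, #{a | j ∈ Z a} * p j := by
  rw [sum_comm' (t' := univ) (s' := fun j => univ.filter (j ∈ Z ·)) (by simp)]
  simp [sum_const, nsmul_eq_mul]

lemma sum_sum_price_le (hp : ∀ j, 0 ≤ p j) {Z : Fin n → Finset (Fin m)} {x : Fin m → ℕ}
    (hZ : ∀ j, #{a | j ∈ Z a} ≤ x j) : ∑ a, ∑ j ∈ Z a, p j ≤ ∑ j, x j * p j := by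
  rw [sum_sum_price_eq]
  exact sum_le_sum fun j _ => mul_le_mul_of_nonneg_right (by exact_mod_cast hZ j) (hp j)

namespace IsApproxWalrasian

lemma Wmult_le (h : IsApproxWalrasian c 0 p B) (x : Fin m → ℕ) :
    Wmult c x ≤ ∑ a, (c a (B a) - ∑ j ∈ B a, p j) + ∑ j, x j * p j := by
  obtain ⟨Z, hZ, hWZ⟩ := exists_Wmult_eq c x
  have hdem : ∀ a, c a (Z a) ≤ c a (B a) - ∑ j ∈ B a, p j + ∑ j ∈ Z a, p j :=
    fun a => by linarith [h.inDemand a (Z a)]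
  rw [hWZ]
  linarith [sum_le_sum fun a (_ : a ∈ univ) => hdem a, sum_sum_price_le h.price_nonneg hZ,
    sum_add_distrib (s := univ) (f := fun a => c a (B a) - ∑ j ∈ B a, p j)
      (g := fun a => ∑ j ∈ Z a, p j)]

lemma le_Wmult_one (h : IsApproxWalrasian c 0 p B) :
    ∑ a, (c a (B a) - ∑ j ∈ B a, p j) + ∑ j, p j ≤ Wmult c (fun _ => 1) := by
  have hsold : ∑ j, p j ≤ ∑ a, ∑ j ∈ B a, p j := by
    rw [sum_sum_price_eq]
    refine sum_le_sum fun j _ => ?_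
    rcases (h.price_nonneg j).eq_or_lt with hj | hj
    · rw [← hj, mul_zero]
    obtain ⟨a, ha⟩ := h.exists_mem_of_price_pos j hj
    have : (1 : ℝ) ≤ #{a | j ∈ B a} := by exact_mod_cast card_pos.2 ⟨a, by simpa using ha⟩
    nlinarith
  have := le_Wmult c (card_filter_mem_le_one h.disjoint)
  rw [sum_sub_distrib]
  linarith

lemma Wmult_double_sub_le (h : IsApproxWalrasian c 0 p B) (j : Fin m) :
    Wmult c (fun k => if k = j then 2 else 1) - Wmult c (fun _ => 1) ≤ p j := by
  have := h.Wmult_le fun k => if k = j then 2 else 1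
  have hx : ∀ k, ((if k = j then 2 else 1 : ℕ) : ℝ) * p k = p k + if k = j then p k else 0 :=
    fun k => by split_ifs <;> push_cast <;> ring
  simp only [hx, sum_add_distrib, sum_ite_eq', mem_univ, if_true] at this
  linarith [h.le_Wmult_one]

/-- Second welfare theorem. -/
lemma inDemand_of_sum_eq_W (h : IsApproxWalrasian c 0 p B) {A : Fin n → Finset (Fin m)}
    (hA : ∀ a b, a ≠ b → Disjoint (A a) (A b)) (hopt : ∑ a, c a (A a) = W c univ)
    (a : Fin n) :
    InDemand (c a) p (A a) := by
  set t := fun a => c a (B a) - ∑ j ∈ B a, p j - (c a (A a) - ∑ j ∈ A a, p j)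
  have ht : ∀ a, 0 ≤ t a := fun a => by linarith [h.inDemand a (A a)]
  have hsum : ∑ a, t a ≤ 0 := by
    have := sum_sum_price_le (x := fun _ => 1) h.price_nonneg (card_filter_mem_le_one hA)
    have hW := h.le_Wmult_one
    simp only [t, sum_sub_distrib, Nat.cast_one, one_mul] at this hW ⊢
    linarith [Wmult_one c]
  intro T
  linarith [single_le_sum (fun a _ => ht a) (mem_univ a), h.inDemand a T]

end IsApproxWalrasian

theorem sum_Wmult_double_sub_le (hc : ∀ a, IsGS (c a)) {A : Fin n → Finset (Fin m)}
    (hA : ∀ a b, a ≠ b → Disjoint (A a) (A b)) (hopt : ∑ a, c a (A a) = W c univ)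
    (i : Fin n) :
    ∑ j ∈ A i, (Wmult c (fun k => if k = j then 2 else 1) - Wmult c (fun _ => 1)) ≤
      c i (A i) := by
  obtain ⟨p, B, h⟩ := exists_isWalrasian hc
  have := h.inDemand_of_sum_eq_W hA hopt i ∅
  simp only [(hc i).1.1, sum_empty] at this
  linarith [sum_le_sum fun j (_ : j ∈ A i) => h.Wmult_double_sub_le j]

end EnglishPrices

section Truncated

variable {n m : ℕ} {v : Fin n → Finset (Fin m) → ℝ} {X : Fin n → Finset (Fin m)}

def truncate (v : Fin n → Finset (Fin m) → ℝ) (X : Fin n → Finset (Fin m)) :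
    Fin n → Finset (Fin m) → ℝ :=
  fun i S => v i (S ∩ X i)

def restWelfare (v : Fin n → Finset (Fin m) → ℝ) (X : Fin n → Finset (Fin m)) (i : Fin n)
    (A : Finset (Fin m)) : ℝ :=
  ∑ k ∈ univ.erase i, v k (X k \ A)

lemma Wmult_truncate (hv : ∀ i, IsValuation (v i))
    (hX : ∀ i j : Fin n, i ≠ j → Disjoint (X i) (X j)) {x : Fin m → ℕ}
    (hx : ∀ j, 1 ≤ x j) :
    Wmult (truncate v X) x = ∑ i, v i (X i) := by
  refine le_antisymm ?_ ?_
  · obtain ⟨Z, -, hZ⟩ := exists_Wmult_eq (truncate v X) x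
    exact hZ ▸ sum_le_sum fun i _ => (hv i).2.1 _ _ inter_subset_right
  · simpa [truncate] using
      le_Wmult (truncate v X) fun j => (card_filter_mem_le_one hX j).trans (hx j)

variable {M : Mechanism n m}

lemma pay_truncate_eq_zero (hEng : IsEnglish M (GSvals m)) (hv : ∀ i, IsValuation (v i))
    (hX : ∀ i j : Fin n, i ≠ j → Disjoint (X i) (X j))
    (hb : InBidSpace (GSvals m) (truncate v X)) (i : Fin n) :
    M.pay (truncate v X) i = 0 := by
  rw [hEng.2 _ hb i]
  refine sum_eq_zero fun j _ => ?_
  rw [Wmult_truncate hv hX fun k => by split_ifs <;> omega, Wmult_truncate hv hX fun _ => le_rfl,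
    sub_self]

lemma value_alloc_truncate (hEng : IsEnglish M (GSvals m)) (hv : ∀ i, IsValuation (v i))
    (hX : ∀ i j : Fin n, i ≠ j → Disjoint (X i) (X j))
    (hb : InBidSpace (GSvals m) (truncate v X)) (i : Fin n) :
    v i (M.alloc (truncate v X) i ∩ X i) = v i (X i) := by
  have hsum : ∑ i, v i (M.alloc (truncate v X) i ∩ X i) = ∑ i, v i (X i) := by
    rw [← Wmult_truncate hv hX fun _ => le_rfl, Wmult_one, ← hEng.1 _ hb]
    rfl
  exact (sum_eq_sum_iff_of_le fun i _ => (hv i).2.1 _ _ inter_subset_right).1 hsum i (mem_univ i)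

lemma sum_update_truncate_le (hv : ∀ i, IsValuation (v i)) (i : Fin n)
    (bi : Finset (Fin m) → ℝ) {Y : Fin n → Finset (Fin m)}
    (hY : ∀ k l : Fin n, k ≠ l → Disjoint (Y k) (Y l)) :
    ∑ k, Function.update (truncate v X) i bi k (Y k) ≤ bi (Y i) + restWelfare v X i (Y i) := by
  rw [← add_sum_erase _ _ (mem_univ i), Function.update_self]
  refine add_le_add_right (sum_le_sum fun k hk => ?_) _
  rw [Function.update_of_ne (ne_of_mem_erase hk)]
  refine (hv k).2.1 _ _ fun j hj => ?_
  rw [mem_inter] at hj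
  exact Finset.mem_sdiff.2 ⟨hj.2, disjoint_left.1 (hY k i (ne_of_mem_erase hk)) hj.1⟩

/-- Agent `i` may hold `A` while the others keep `X k \ A.erase j`: only item `j` is used twice. -/
lemma add_restWelfare_erase_le_Wmult (i : Fin n) (bi : Finset (Fin m) → ℝ)
    (hX : ∀ i j : Fin n, i ≠ j → Disjoint (X i) (X j)) (A : Finset (Fin m)) (j : Fin m) :
    bi A + restWelfare v X i (A.erase j) ≤
      Wmult (Function.update (truncate v X) i bi) fun k => if k = j then 2 else 1 := by
  set Z := Function.update (fun k => X k \ A.erase j) i A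
  have hZ : ∀ k, k ≠ i → Z k = X k \ A.erase j := fun k hk => Function.update_of_ne hk _ _
  have hZi : Z i = A := Function.update_self _ _ _
  have hcount : ∀ l, #{k | l ∈ Z k} ≤ if l = j then 2 else 1 := fun l => by
    have hle := card_filter_mem_le_one hX l
    have hmem : ∀ k ≠ i, l ∈ Z k → l ∈ X k ∧ (l = j ∨ l ∉ A) := fun k hki hk => by
      rw [hZ k hki, Finset.mem_sdiff, mem_erase] at hk
      tauto
    split_ifs with hl
    · refine (card_le_card (t := insert i (univ.filter (l ∈ X ·))) fun k hk => ?_).trans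
        ((card_insert_le _ _).trans (by omega))
      rcases eq_or_ne k i with rfl | hki
      · exact mem_insert_self _ _
      · exact mem_insert_of_mem (by simpa using (hmem k hki (by simpa using hk)).1)
    · by_cases hlA : l ∈ A
      · refine card_le_one.2 fun k hk k' hk' => ?_
        have hi : ∀ k, l ∈ Z k → k = i := fun k hk => by
          by_contra hki
          exact (hmem k hki hk).2.elim hl (· hlA)
        rw [hi k (by simpa using hk), hi k' (by simpa using hk')]
      · refine (card_le_card fun k hk => ?_).trans hle
        rw [mem_filter] at hk ⊢
        rcases eq_or_ne k i with rfl | hki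
        · exact absurd (hZi ▸ hk.2) hlA
        · exact ⟨hk.1, (hmem k hki hk.2).1⟩
  calc bi A + restWelfare v X i (A.erase j)
      = ∑ k, Function.update (truncate v X) i bi k (Z k) := by
        rw [← add_sum_erase _ _ (mem_univ i), Function.update_self, hZi]
        refine congrArg _ (sum_congr rfl fun k hk => ?_)
        rw [Function.update_of_ne (ne_of_mem_erase hk), hZ k (ne_of_mem_erase hk), truncate,
          inter_eq_left.2 sdiff_subset]
    _ ≤ _ := le_Wmult _ hcount

lemma restWelfare_empty (i : Fin n) :
    restWelfare v X i ∅ = ∑ k, v k (X k) - v i (X i) := by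
  simp only [restWelfare, sdiff_empty]
  exact sum_erase_eq_sub (mem_univ i)

lemma restWelfare_empty_sub_le (hv : ∀ i, IsGS (v i)) (i : Fin n) (A : Finset (Fin m)) :
    restWelfare v X i ∅ - restWelfare v X i A ≤
      ∑ j ∈ A, (restWelfare v X i (A.erase j) - restWelfare v X i A) := by
  simp only [restWelfare, sdiff_empty, ← sum_sub_distrib]
  rw [sum_comm]
  exact sum_le_sum fun k _ => (hv k).sub_sdiff_le_sum (X k) A

lemma add_restWelfare_le_W (hX : ∀ i j : Fin n, i ≠ j → Disjoint (X i) (X j)) (i : Fin n)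
    (A : Finset (Fin m)) : v i A + restWelfare v X i A ≤ W v univ := by
  set Z := Function.update (fun k => X k \ A) i A
  have hZ : ∀ k, k ≠ i → Z k = X k \ A := fun k hk => Function.update_of_ne hk _ _
  have hZi : Z i = A := Function.update_self _ _ _
  have hdisj : ∀ k l : Fin n, k ≠ l → Disjoint (Z k) (Z l) := fun k l hkl => by
    rcases eq_or_ne k i with rfl | hki
    · rw [hZi, hZ l hkl.symm]; exact disjoint_sdiff
    rcases eq_or_ne l i with rfl | hli
    · rw [hZi, hZ k hki]; exact sdiff_disjoint
    rw [hZ k hki, hZ l hli]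
    exact (hX k l hkl).mono sdiff_subset sdiff_subset
  calc v i A + restWelfare v X i A = ∑ k, v k (Z k) := by
        rw [← add_sum_erase _ _ (mem_univ i), hZi]
        exact congrArg _ (sum_congr rfl fun k hk => by rw [hZ k (ne_of_mem_erase hk)])
    _ ≤ W v univ := le_W v hdisj fun _ => subset_univ _

/-- A deviation pays at least the externality it imposes on the truncated bidders. -/
lemma util_update_truncate_le (hEng : IsEnglish M (GSvals m)) (hM : AllocDisjoint M (GSvals m))
    (hv : ∀ i, IsGS (v i)) (hX : ∀ i j : Fin n, i ≠ j → Disjoint (X i) (X j))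
    (hopt : W v univ = ∑ i, v i (X i)) (hb : InBidSpace (GSvals m) (truncate v X)) (i : Fin n)
    {bi : Finset (Fin m) → ℝ} (hbi : bi ∈ GSvals m) :
    util M (v i) i (Function.update (truncate v X) i bi) ≤ v i (X i) := by
  set c := Function.update (truncate v X) i bi
  have hc : InBidSpace (GSvals m) c := fun k => by
    rcases eq_or_ne k i with rfl | hki
    · simpa [c] using hbi
    · simpa [c, Function.update_of_ne hki] using hb k
  set Y := M.alloc c
  have hW1 : Wmult c (fun _ => 1) ≤ bi (Y i) + restWelfare v X i (Y i) := by
    rw [Wmult_one, ← hEng.1 c hc]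
    exact sum_update_truncate_le (fun k => (hv k).1) i bi (hM c hc)
  have hpay : restWelfare v X i ∅ - restWelfare v X i (Y i) ≤ M.pay c i := by
    rw [hEng.2 c hc i]
    refine (restWelfare_empty_sub_le hv i (Y i)).trans (sum_le_sum fun j _ => ?_)
    linarith [add_restWelfare_erase_le_Wmult i bi hX (Y i) j (v := v)]
  have hW := add_restWelfare_le_W (v := v) hX i (Y i)
  rw [restWelfare_empty] at hpay
  unfold util
  linarith

end Truncated

theorem stmt0_general {n m : ℕ} (M : Mechanism n m)
    (hM : AllocDisjoint M (GSvals m))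
    (hEng : IsEnglish M (GSvals m))
    (v : Fin n → Finset (Fin m) → ℝ) (hv : ∀ i, IsGS (v i)) :
    ∃ b : Fin n → Finset (Fin m) → ℝ,
      IsNash M (GSvals m) v b ∧
      (∀ i : Fin n, HasExposureFactor M (GSvals m) (v i) i (b i) 0) ∧
      ∑ i, v i (M.alloc b i) = OPT v := by
  obtain ⟨X, hX, -, hopt⟩ := exists_W_eq v univ
  have hval i := (hv i).1
  have hb : InBidSpace (GSvals m) (truncate v X) := fun i => (hv i).truncate (X i)
  have hXle : ∀ i, v i (X i) ≤ v i (M.alloc (truncate v X) i) := fun i =>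
    value_alloc_truncate hEng hval hX hb i ▸ (hval i).2.1 _ _ inter_subset_left
  refine ⟨truncate v X, ⟨hb, fun i bi hbi => ?_⟩, fun i c hc hci => ?_, ?_⟩
  · calc util M (v i) i (Function.update (truncate v X) i bi) ≤ v i (X i) :=
          util_update_truncate_le hEng hM hv hX hopt hb i hbi
      _ ≤ util M (v i) i (truncate v X) := by
          rw [util, pay_truncate_eq_zero hEng hval hX hb, sub_zero]; exact hXle i
  · rw [hEng.2 c hc i, add_zero, one_mul]
    calc _ ≤ c i (M.alloc c i) := sum_Wmult_double_sub_le hc (hM c hc) (hEng.1 c hc) i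
      _ ≤ v i (M.alloc c i) := hci ▸ (hval i).2.1 _ _ inter_subset_left
  · refine le_antisymm (le_W v (hM _ hb) fun _ => subset_univ _) ?_
    rw [OPT, hopt]
    exact sum_le_sum fun i _ => hXle i

/-- For GS true valuations, every English Walrasian mechanism on the GS bid space
has a pure Nash equilibrium in non-exposure bids whose allocation achieves the optimal
welfare (so the price of stability is 1). -/
theorem stmt0 {n m : ℕ} (M : Mechanism n m)
    (hM : AllocDisjoint M (GSvals m)) (hpay : PayNonneg M (GSvals m))
    (hEng : IsEnglish M (GSvals m))
    (v : Fin n → Finset (Fin m) → ℝ) (hv : ∀ i, IsGS (v i)) :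
    ∃ b : Fin n → Finset (Fin m) → ℝ,
      IsNash M (GSvals m) v b ∧
      (∀ i : Fin n, HasExposureFactor M (GSvals m) (v i) i (b i) 0) ∧
      ∑ i, v i (M.alloc b i) = OPT v :=
  stmt0_general M hM hEng v hv
end

section
/- Let both the valuation space 𝒱 and the bid space 𝓑 equal the set of XOS valuations, let the mechanism be any declared welfare maximizer, and let D be a finitely supported probability distribution on 𝒱^n (valuations of different agents may be correlated). Then for every γ ≥ 0 and every Bayes-Nash equilibrium strategy profile s = (s_1, …, s_n) in which each s_i has exposure factor γ under D, it holds that (6 + 4γ) · E_{v∼D}[ ∑_i v_i(X_i(s(v))) ] ≥ E_{v∼D}[ OPT(v) ]. In other words, BPoA_γ ≤ 6 + 4γ. -/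
open Finset

/-!
Smoothness argument. Fix a valuation profile `v` with optimal allocation `O`, the equilibrium bids
`b`, and the allocation `X` they induce. If agent `i` deviates to the bid `vᵢ / 2`, welfare
maximization against the alternative allocation `(Oᵢ, Xₖ \ Oᵢ)` secures her a utility of at least
`vᵢ(Oᵢ)/2 - bᵢ(Xᵢ) - ∑_{k ≠ i} pₖ(Xₖ ∩ Oᵢ)`, where `pₖ` are supporting prices of the XOS bid `bₖ`
at `Xₖ`. Summing over `i`, the price terms add up to at most the declared welfare, so
`OPT(v)/2 ≤ ∑ᵢ (deviation utility of i) + 2 ∑ᵢ bᵢ(Xᵢ)`. Taking expectations, the Bayes-Nash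
condition bounds the deviation utilities by equilibrium utilities, hence by the welfare, and the
exposure factor bounds the expected declared welfare by `(1 + γ)` times the expected welfare.
-/

open Function

variable {n m : ℕ}

namespace IsXOS

variable {v : Finset (Fin m) → ℝ}

theorem apply_nonneg (h : IsXOS v) (S : Finset (Fin m)) : 0 ≤ v S := by
  obtain ⟨k, w, hw, hv⟩ := h
  rw [hv]
  exact le_sup'_of_le _ (mem_univ 0) (sum_nonneg fun j _ => hw 0 j)

theorem div_const (h : IsXOS v) {c : ℝ} (hc : 0 ≤ c) : IsXOS (fun S => v S / c) := by
  obtain ⟨k, w, hw, hv⟩ := h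
  refine ⟨k, fun i j => w i j / c, fun i j => div_nonneg (hw i j) hc, fun S => ?_⟩
  simp only [hv, sup'_div₀ hc, sum_div]

theorem exists_supporting_prices (h : IsXOS v) (X : Finset (Fin m)) :
    ∃ p : Fin m → ℝ, (∀ j, 0 ≤ p j) ∧ v X = ∑ j ∈ X, p j ∧ ∀ S, ∑ j ∈ S, p j ≤ v S := by
  obtain ⟨k, w, hw, hv⟩ := h
  obtain ⟨i, -, hi⟩ := exists_mem_eq_sup' univ_nonempty fun i => ∑ j ∈ X, w i j
  refine ⟨w i, hw i, by rw [hv, hi], fun S => ?_⟩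
  rw [hv]
  exact le_sup'_of_le _ (mem_univ i) le_rfl

end IsXOS

theorem sub_apply_sdiff_le_sum_inter {v : Finset (Fin m) → ℝ} {p : Fin m → ℝ}
    {X : Finset (Fin m)} (hX : v X = ∑ j ∈ X, p j) (hp : ∀ S, ∑ j ∈ S, p j ≤ v S)
    (T : Finset (Fin m)) : v X - v (X \ T) ≤ ∑ j ∈ X ∩ T, p j := by
  have := hp (X \ T)
  rw [hX, ← sum_inter_add_sum_sdiff X T]
  linarith

theorem sum_sum_inter_le_sum {ι α : Type*} [Fintype ι] [DecidableEq α] {O : ι → Finset α}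
    (hO : Pairwise (Disjoint on O)) {p : α → ℝ} (hp : ∀ j, 0 ≤ p j) (X : Finset α) :
    ∑ i, ∑ j ∈ X ∩ O i, p j ≤ ∑ j ∈ X, p j := by
  rw [← sum_biUnion fun i _ k _ hik => (hO hik).mono inter_subset_right inter_subset_right]
  exact sum_le_sum_of_subset_of_nonneg (biUnion_subset.2 fun i _ => inter_subset_left)
    fun j _ _ => hp j

theorem sum_update_apply_update {ι α : Type*} [Fintype ι] [DecidableEq ι]
    (b : ι → α → ℝ) (Y : ι → α) (i : ι) (c : α → ℝ) (S : α) :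
    ∑ k, update b i c k (update Y i S k) = c S + ∑ k ∈ univ.erase i, b k (Y k) := by
  rw [← add_sum_erase _ _ (mem_univ i), update_self, update_self]
  congr 1
  exact sum_congr rfl fun k hk => by
    rw [update_of_ne (ne_of_mem_erase hk), update_of_ne (ne_of_mem_erase hk)]

theorem pairwise_disjoint_update_sdiff {ι α : Type*} [DecidableEq ι] [DecidableEq α]
    {X : ι → Finset α} (hX : Pairwise (Disjoint on X)) (i : ι) (T : Finset α) :
    Pairwise (Disjoint on update (fun k => X k \ T) i T) := by
  intro k l hkl
  simp only [onFun]
  rcases eq_or_ne k i with rfl | hk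
  · rw [update_self, update_of_ne hkl.symm]
    exact disjoint_sdiff
  rcases eq_or_ne l i with rfl | hl
  · rw [update_self, update_of_ne hk]
    exact sdiff_disjoint
  rw [update_of_ne hk, update_of_ne hl]
  exact (hX hkl).mono sdiff_subset sdiff_subset

section Welfare

variable (b : Fin n → Finset (Fin m) → ℝ)

theorem finite_welfare_values (S : Finset (Fin m)) :
    {t : ℝ | ∃ X : Fin n → Finset (Fin m), (∀ i j : Fin n, i ≠ j → Disjoint (X i) (X j)) ∧
      (∀ i, X i ⊆ S) ∧ t = ∑ i, b i (X i)}.Finite :=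
  (Set.finite_range fun Y : Fin n → Finset (Fin m) => ∑ i, b i (Y i)).subset
    fun _ ⟨Y, _, _, ht⟩ => ⟨Y, ht.symm⟩

theorem sum_le_W {S : Finset (Fin m)} {X : Fin n → Finset (Fin m)}
    (hX : Pairwise (Disjoint on X)) (hXS : ∀ i, X i ⊆ S) : ∑ i, b i (X i) ≤ W b S :=
  le_csSup (finite_welfare_values b S).bddAbove ⟨X, fun _ _ hij => hX hij, hXS, rfl⟩

theorem exists_W_eq_sum (S : Finset (Fin m)) :
    ∃ O : Fin n → Finset (Fin m), Pairwise (Disjoint on O) ∧ W b S = ∑ i, b i (O i) := by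
  obtain ⟨O, hO, -, hW⟩ := Set.Nonempty.csSup_mem
    (by exact ⟨_, fun _ => ∅, fun _ _ _ => disjoint_bot_left, fun _ => empty_subset _, rfl⟩)
    (finite_welfare_values b S)
  exact ⟨O, fun i j => hO i j, hW⟩

end Welfare

section DeclaredWelfareMaximizer

variable {M : Mechanism n m} {B : Set (Finset (Fin m) → ℝ)}

theorem InBidSpace.update {b : Fin n → Finset (Fin m) → ℝ} (hb : InBidSpace B b) (i : Fin n)
    {c : Finset (Fin m) → ℝ} (hc : c ∈ B) : InBidSpace B (update b i c) := by
  intro k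
  rcases eq_or_ne k i with rfl | hk
  · rwa [update_self]
  · rw [update_of_ne hk]
    exact hb k

theorem IsDWM.sub_le_util (hDWM : IsDWM M B) {b : Fin n → Finset (Fin m) → ℝ}
    (hb : InBidSpace B b) (v : Finset (Fin m) → ℝ) (i : Fin n) :
    v (M.alloc b i) - b i (M.alloc b i) ≤ util M v i b := by
  have := hDWM.2.1 b hb i
  unfold util
  linarith

/-- Compare the allocation chosen after the deviation with the alternative `(T, Xₖ \ T)`, and the
others' part of it with the allocation `X` chosen before the deviation. -/
theorem IsDWM.apply_sub_apply_alloc_update_le (hDWM : IsDWM M B)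
    (hM : AllocDisjoint M B) (hB : ∀ u ∈ B, ∀ S, 0 ≤ u S)
    {b : Fin n → Finset (Fin m) → ℝ} (hb : InBidSpace B b) (i : Fin n)
    {c : Finset (Fin m) → ℝ} (hc : c ∈ B) (T : Finset (Fin m)) :
    c T - c (M.alloc (update b i c) i) ≤
      b i (M.alloc b i) + ∑ k ∈ univ.erase i, (b k (M.alloc b k) - b k (M.alloc b k \ T)) := by
  set A := M.alloc (update b i c)
  have hbc := hb.update i hc
  have hdeviate : c T + ∑ k ∈ univ.erase i, b k (M.alloc b k \ T) ≤
      c (A i) + ∑ k ∈ univ.erase i, b k (A k) := by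
    rw [← sum_update_apply_update, ← sum_update_apply_update b A i c (A i), update_eq_self,
      hDWM.1 _ hbc]
    exact sum_le_W _ (pairwise_disjoint_update_sdiff (fun k l => hM b hb k l) i T)
      fun _ => subset_univ _
  have hothers : ∑ k ∈ univ.erase i, b k (A k) ≤ ∑ k, b k (M.alloc b k) :=
    calc ∑ k ∈ univ.erase i, b k (A k)
        ≤ ∑ k, b k (A k) :=
          sum_le_sum_of_subset_of_nonneg (erase_subset _ _) fun k _ _ => hB _ (hb k) _
      _ ≤ W b univ := sum_le_W b (fun k l => hM _ hbc k l) fun _ => subset_univ _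
      _ = ∑ k, b k (M.alloc b k) := (hDWM.1 b hb).symm
  rw [← add_sum_erase _ _ (mem_univ i)] at hothers
  rw [sum_sub_distrib]
  linarith

end DeclaredWelfareMaximizer

theorem half_OPT_le_sum {M : Mechanism n m} (hM : AllocDisjoint M (XOSvals m))
    (hDWM : IsDWM M (XOSvals m)) {v : Fin n → Finset (Fin m) → ℝ} (hv : ∀ i, v i ∈ XOSvals m)
    {b : Fin n → Finset (Fin m) → ℝ} (hb : InBidSpace (XOSvals m) b) :
    OPT v / 2 ≤ ∑ i, (util M (v i) i (update b i fun S => v i S / 2) + 2 * b i (M.alloc b i)) := by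
  obtain ⟨O, hO, hOPT⟩ := exists_W_eq_sum v univ
  choose p hp0 hpX hpS using fun k => (hb k).exists_supporting_prices (M.alloc b k)
  have hdeviate (i : Fin n) : v i (O i) / 2 - b i (M.alloc b i)
      - ∑ k ∈ univ.erase i, ∑ j ∈ M.alloc b k ∩ O i, p k j ≤
        util M (v i) i (update b i fun S => v i S / 2) := by
    have hvi : IsXOS fun S => v i S / 2 := (hv i).div_const zero_le_two
    have hwelfare := hDWM.apply_sub_apply_alloc_update_le hM (fun u hu => hu.apply_nonneg) hb i
      hvi (O i)
    have hprices : ∑ k ∈ univ.erase i, (b k (M.alloc b k) - b k (M.alloc b k \ O i)) ≤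
        ∑ k ∈ univ.erase i, ∑ j ∈ M.alloc b k ∩ O i, p k j :=
      sum_le_sum fun k _ => sub_apply_sdiff_le_sum_inter (hpX k) (hpS k) (O i)
    have hutil := hDWM.sub_le_util (hb.update i hvi) (v i) i
    simp only [update_self] at hwelfare hutil
    linarith
  have hcross : ∑ i, ∑ k ∈ univ.erase i, ∑ j ∈ M.alloc b k ∩ O i, p k j ≤
      ∑ i, b i (M.alloc b i) :=
    calc ∑ i, ∑ k ∈ univ.erase i, ∑ j ∈ M.alloc b k ∩ O i, p k j
        ≤ ∑ i, ∑ k, ∑ j ∈ M.alloc b k ∩ O i, p k j :=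
          sum_le_sum fun i _ => sum_le_sum_of_subset_of_nonneg (erase_subset _ _)
            fun k _ _ => sum_nonneg fun j _ => hp0 k j
      _ = ∑ k, ∑ i, ∑ j ∈ M.alloc b k ∩ O i, p k j := sum_comm
      _ ≤ ∑ k, b k (M.alloc b k) :=
          sum_le_sum fun k _ => (hpX k).symm ▸ sum_sum_inter_le_sum hO (hp0 k) _
  have := sum_le_sum fun i (_ : i ∈ univ) => hdeviate i
  simp only [OPT, hOPT, sum_div, sum_sub_distrib, sum_add_distrib, ← mul_sum] at this ⊢
  linarith

namespace FinDist

variable {α : Type*} (D : FinDist α)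

theorem exp_mono {f g : α → ℝ} (h : ∀ a ∈ D.supp, f a ≤ g a) : D.exp f ≤ D.exp g :=
  sum_le_sum fun a ha => mul_le_mul_of_nonneg_left (h a ha) (D.nonneg a)

theorem exp_add (f g : α → ℝ) : D.exp (fun a => f a + g a) = D.exp f + D.exp g := by
  simp only [FinDist.exp, mul_add, sum_add_distrib]

theorem exp_sub (f g : α → ℝ) : D.exp (fun a => f a - g a) = D.exp f - D.exp g := by
  simp only [FinDist.exp, mul_sub, sum_sub_distrib]

theorem exp_const_mul (c : ℝ) (f : α → ℝ) : D.exp (fun a => c * f a) = c * D.exp f := by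
  simp only [FinDist.exp, mul_sum, mul_left_comm]

theorem exp_sum {ι : Type*} (t : Finset ι) (f : ι → α → ℝ) :
    D.exp (fun a => ∑ i ∈ t, f i a) = ∑ i ∈ t, D.exp (f i) := by
  simp only [FinDist.exp, mul_sum]
  exact sum_comm

end FinDist

/-- The exposure condition only speaks about payments against opponents' bids `c a` that depend on
agent `i`'s own type `a`. Take for `c a` the witness of `IsDWM` (which charges exactly the declared
value) at the profile with `vᵢ = a` maximizing `bid - (1 + γ) value`. -/
theorem exp_bid_le_of_bayesExposure {M : Mechanism n m} {V B : Set (Finset (Fin m) → ℝ)}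
    (hDWM : IsDWM M B) {D : FinDist (Fin n → Finset (Fin m) → ℝ)} (hD : ∀ v ∈ D.supp, ∀ k, v k ∈ V)
    {s : Fin n → (Finset (Fin m) → ℝ) → Finset (Fin m) → ℝ} (hs : ∀ k, ∀ vi ∈ V, s k vi ∈ B)
    {i : Fin n} {γ : ℝ} (hexp : BayesExposure M V B D i (s i) γ) :
    D.exp (fun v => s i (v i) (M.alloc (fun k => s k (v k)) i)) ≤
      (1 + γ) * D.exp (fun v => v i (M.alloc (fun k => s k (v k)) i)) := by
  classical
  let g (v : Fin n → Finset (Fin m) → ℝ) : ℝ :=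
    s i (v i) (M.alloc (fun k => s k (v k)) i) - (1 + γ) * v i (M.alloc (fun k => s k (v k)) i)
  have hworst (a : Finset (Fin m) → ℝ) : ∃ c : Fin n → Finset (Fin m) → ℝ,
      (a ∈ V → InBidSpace B c ∧ c i = s i a) ∧
      ∀ v ∈ D.supp, v i = a → g v ≤ M.pay c i - (1 + γ) * a (M.alloc c i) := by
    by_cases hfiber : (D.supp.filter fun v => v i = a).Nonempty
    · obtain ⟨w, hw, hwmax⟩ := exists_max_image _ g hfiber
      obtain ⟨hwD, rfl⟩ := mem_filter.1 hw
      obtain ⟨c, hcB, hci, hcalloc, hcpay⟩ :=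
        hDWM.2.2 _ (fun k => hs k (w k) (hD w hwD k)) i
      refine ⟨c, fun _ => ⟨hcB, hci⟩, fun v hv hvi => ?_⟩
      rw [hcpay, hcalloc]
      exact hwmax v (mem_filter.2 ⟨hv, hvi⟩)
    · exact ⟨fun k => s k a, fun ha => ⟨fun k => hs k a ha, rfl⟩,
        fun v hv hvi => absurd ⟨v, mem_filter.2 ⟨hv, hvi⟩⟩ hfiber⟩
  choose c hcB hc using hworst
  have hle := D.exp_mono fun v hv => hc (v i) v hv rfl
  have := hexp c hcB
  rw [D.exp_sub, D.exp_const_mul, D.exp_sub, D.exp_const_mul] at hle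
  linarith

theorem stmt3_general {n m : ℕ} (M : Mechanism n m)
    (hM : AllocDisjoint M (XOSvals m)) (hpay : PayNonneg M (XOSvals m))
    (hDWM : IsDWM M (XOSvals m))
    (γ : ℝ)
    (D : FinDist (Fin n → Finset (Fin m) → ℝ))
    (hD : ∀ v ∈ D.supp, ∀ i : Fin n, v i ∈ XOSvals m)
    (s : Fin n → (Finset (Fin m) → ℝ) → Finset (Fin m) → ℝ)
    (hBNE : IsBNE M (XOSvals m) (XOSvals m) D s)
    (hexp : ∀ i : Fin n, BayesExposure M (XOSvals m) (XOSvals m) D i (s i) γ) :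
    D.exp (fun v => OPT v) ≤
      (6 + 4 * γ) * D.exp (fun v => ∑ i, v i (M.alloc (fun k => s k (v k)) i)) := by
  have hb (v) (hv : v ∈ D.supp) : InBidSpace (XOSvals m) fun k => s k (v k) :=
    fun k => hBNE.1 k _ (hD v hv k)
  have hagent (i : Fin n) :
      D.exp (fun v => util M (v i) i (update (fun k => s k (v k)) i fun S => v i S / 2)
        + 2 * s i (v i) (M.alloc (fun k => s k (v k)) i)) ≤
      (3 + 2 * γ) * D.exp (fun v => v i (M.alloc (fun k => s k (v k)) i)) := by
    have hdeviate := hBNE.2 i (fun a S => a S / 2) fun a ha => IsXOS.div_const ha zero_le_two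
    have hutil : D.exp (fun v => util M (v i) i fun k => s k (v k)) ≤
        D.exp (fun v => v i (M.alloc (fun k => s k (v k)) i)) :=
      D.exp_mono fun v hv => sub_le_self _ (hpay _ (hb v hv) i)
    have hbid := exp_bid_le_of_bayesExposure hDWM hD hBNE.1 (hexp i)
    rw [D.exp_add, D.exp_const_mul]
    linarith
  calc D.exp (fun v => OPT v)
      ≤ D.exp (fun v => 2 * ∑ i, (util M (v i) i (update (fun k => s k (v k)) i
          fun S => v i S / 2) + 2 * s i (v i) (M.alloc (fun k => s k (v k)) i))) :=
        D.exp_mono fun v hv => by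
          linarith [half_OPT_le_sum hM hDWM (hD v hv) (hb v hv)]
    _ ≤ 2 * ∑ i, (3 + 2 * γ) * D.exp (fun v => v i (M.alloc (fun k => s k (v k)) i)) := by
        rw [D.exp_const_mul, D.exp_sum]
        gcongr with i
        exact hagent i
    _ = (6 + 4 * γ) * D.exp (fun v => ∑ i, v i (M.alloc (fun k => s k (v k)) i)) := by
        rw [D.exp_sum, ← mul_sum, ← mul_assoc]
        ring

/-- BPoA_γ ≤ 6 + 4γ for declared welfare maximizers with XOS valuations and bids,
for any (possibly correlated) finitely supported distribution over valuation profiles. -/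
theorem stmt3 {n m : ℕ} (M : Mechanism n m)
    (hM : AllocDisjoint M (XOSvals m)) (hpay : PayNonneg M (XOSvals m))
    (hDWM : IsDWM M (XOSvals m))
    (γ : ℝ) (hγ : 0 ≤ γ)
    (D : FinDist (Fin n → Finset (Fin m) → ℝ))
    (hD : ∀ v ∈ D.supp, ∀ i : Fin n, v i ∈ XOSvals m)
    (s : Fin n → (Finset (Fin m) → ℝ) → Finset (Fin m) → ℝ)
    (hBNE : IsBNE M (XOSvals m) (XOSvals m) D s)
    (hexp : ∀ i : Fin n, BayesExposure M (XOSvals m) (XOSvals m) D i (s i) γ) :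
    D.exp (fun v => OPT v) ≤
      (6 + 4 * γ) * D.exp (fun v => ∑ i, v i (M.alloc (fun k => s k (v k)) i)) :=
  stmt3_general M hM hpay hDWM γ D hD s hBNE hexp
end
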